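/- Let Ψ be an L-layer KAN with widths n_1,…,n_{L+1} and n_d basis functions, where each b_k is bounded by B > 0 and Lipschitz with constant K > 0. Let {A_{ℓ,tg}} and {A_{ℓ,pt}} be target and pre-trained parameter tensors with ‖A_{ℓ,tg}‖_F ≤ M and ‖A_{ℓ,pt}‖_F ≤ M for all ℓ, set E_ℓ = A_{ℓ,tg} − A_{ℓ,pt}, and fix ranks r_{ℓ,1} ≤ n_ℓ, r_{ℓ,2} ≤ n_{ℓ+1}, r_{ℓ,3} ≤ n_d. Then there exist core tensors G_ℓ ∈ ℝ^{r_{ℓ,1}×r_{ℓ,2}×r_{ℓ,3}} and matrices U_ℓ^{(1)} ∈ ℝ^{n_ℓ×r_{ℓ,1}}, U_ℓ^{(2)} ∈ ℝ^{n_{ℓ+1}×r_{ℓ,2}}, U_ℓ^{(3)} ∈ ℝ^{n_d×r_{ℓ,3}} such that, with A_{ℓ,ft} = A_{ℓ,pt} + G_ℓ ×₁ U_ℓ^{(1)} ×₂ U_ℓ^{(2)} ×₃ U_ℓ^{(3)}, for every x ∈ ℝ^{n_1}: ‖Ψ(x;{A_{ℓ,ft}}) − Ψ(x;{A_{ℓ,tg}})‖₂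 ≤ Σ_{ℓ=1}^{L} (M K √n_d)^{L−ℓ} B √(n_ℓ n_d) · ( Σ_{r=r_{ℓ,1}+1}^{n_ℓ} σ_r(E_ℓ^{(1)})² + Σ_{r=r_{ℓ,2}+1}^{n_{ℓ+1}} σ_r(E_ℓ^{(2)})² + Σ_{r=r_{ℓ,3}+1}^{n_d} σ_r(E_ℓ^{(3)})² )^{1/2}. -/

import Mathlib

noncomputable section
open Finset Matrix

/-- Euclidean norm of a finitely-indexed real vector. -/
def enorm {ι : Type*} [Fintype ι] (x : ι → ℝ) : ℝ :=
  Real.sqrt (∑ i, x i ^ 2)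

/-- Frobenius norm of a third-order tensor. -/
def frob3 {n1 n2 n3 : ℕ} (A : Fin n1 → Fin n2 → Fin n3 → ℝ) : ℝ :=
  Real.sqrt (∑ p, ∑ q, ∑ k, A p q k ^ 2)

/-- Mode-1 unfolding of a third-order tensor. -/
def unfold1 {n1 n2 n3 : ℕ} (A : Fin n1 → Fin n2 → Fin n3 → ℝ) :
    Matrix (Fin n1) (Fin n2 × Fin n3) ℝ :=
  Matrix.of fun p qk => A p qk.1 qk.2

/-- Mode-2 unfolding of a third-order tensor. -/
def unfold2 {n1 n2 n3 : ℕ} (A : Fin n1 → Fin n2 → Fin n3 → ℝ) :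
    Matrix (Fin n2) (Fin n1 × Fin n3) ℝ :=
  Matrix.of fun q pk => A pk.1 q pk.2

/-- Mode-3 unfolding of a third-order tensor. -/
def unfold3 {n1 n2 n3 : ℕ} (A : Fin n1 → Fin n2 → Fin n3 → ℝ) :
    Matrix (Fin n3) (Fin n1 × Fin n2) ℝ :=
  Matrix.of fun k pq => A pq.1 pq.2 k

/-- `sval E r` is the `(r+1)`-th largest singular value of `E`, i.e. the square root
of the `(r+1)`-th largest eigenvalue of `E * Eᵀ` (here `Eᴴ = Eᵀ` over `ℝ`). -/
def sval {n : ℕ} {ι : Type*} [Fintype ι] (E : Matrix (Fin n) ι ℝ) (r : Fin n) : ℝ :=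
  Real.sqrt (((Matrix.isHermitian_mul_conjTranspose_self E).eigenvalues ∘
    Tuple.sort (Matrix.isHermitian_mul_conjTranspose_self E).eigenvalues) r.rev)

/-- Tucker product `G ×₁ U1 ×₂ U2 ×₃ U3`. -/
def tucker {n1 n2 n3 r1 r2 r3 : ℕ} (G : Fin r1 → Fin r2 → Fin r3 → ℝ)
    (U1 : Matrix (Fin n1) (Fin r1) ℝ) (U2 : Matrix (Fin n2) (Fin r2) ℝ)
    (U3 : Matrix (Fin n3) (Fin r3) ℝ) : Fin n1 → Fin n2 → Fin n3 → ℝ :=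
  fun p q k => ∑ a, ∑ b, ∑ c, G a b c * U1 p a * U2 q b * U3 k c

/-- A KAN layer: `Φ(z;A)_q = Σ_p Σ_k A_{p,q,k} b_k(z_p)`. -/
def kanLayer {n m nd : ℕ} (b : Fin nd → ℝ → ℝ) (A : Fin n → Fin m → Fin nd → ℝ)
    (z : Fin n → ℝ) : Fin m → ℝ :=
  fun q => ∑ p, ∑ k, A p q k * b k (z p)

/-- `L`-layer KAN: composition of the first `L` layers.  The widths are
`n 0, n 1, …` (the paper's `n_1, …, n_{L+1}`) and layer `ℓ` (0-based) has
parameter tensor `A ℓ ∈ ℝ^{n ℓ × n (ℓ+1) × n_d}`. -/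
def kanForward {nd : ℕ} (b : Fin nd → ℝ → ℝ) (n : ℕ → ℕ)
    (A : ∀ ℓ : ℕ, Fin (n ℓ) → Fin (n (ℓ + 1)) → Fin nd → ℝ) :
    ∀ L : ℕ, (Fin (n 0) → ℝ) → Fin (n L) → ℝ
  | 0, x => x
  | (L + 1), x => kanLayer b (A L) (kanForward b n A L x)

/-! For each layer take a truncated higher-order SVD of `E = A_tg - A_pt`: `U_i` holds
eigenvectors of `E^{(i)} E^{(i)ᵀ}` for its `r_i` largest eigenvalues and
`G = E ×₁ U₁ᵀ ×₂ U₂ᵀ ×₃ U₃ᵀ`, so the Tucker correction is `E ×₁ P₁ ×₂ P₂ ×₃ P₃` with the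
orthogonal projectors `P_i = U_i U_iᵀ`. Removing one projector at a time by Pythagoras bounds
the squared Frobenius error by `Σ_i ‖P_i E^{(i)} - E^{(i)}‖²_F`, and each of these is the tail sum
of squared singular values of `E^{(i)}`.

By Cauchy–Schwarz a layer moves by at most `B √(n_ℓ n_d) ‖ΔA‖_F` when its parameters change and
by at most `K √n_d ‖A‖_F ‖Δz‖₂` when its input changes. Unrolling this recursion through the
layers, with `‖A_tg‖_F ≤ M`, gives the bound. -/

def frobSq {m κ : Type*} [Fintype m] [Fintype κ] (M : Matrix m κ ℝ) : ℝ := (Mᵀ * M).trace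

section FrobSq

variable {m κ : Type*} [Fintype m] {P : Matrix m m ℝ}

lemma transpose_proj_mul_sub_mul_proj_mul_eq_zero (hPt : Pᵀ = P) (hPP : IsIdempotentElem P)
    (X Z : Matrix m κ ℝ) : (P * X - X)ᵀ * (P * Z) = 0 := by
  rw [Matrix.transpose_sub, Matrix.transpose_mul, hPt, Matrix.sub_mul, Matrix.mul_assoc,
    ← Matrix.mul_assoc P, hPP.eq, sub_self]

variable [Fintype κ]

lemma frobSq_eq_sum (M : Matrix m κ ℝ) : frobSq M = ∑ i, ∑ j, M i j ^ 2 := by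
  simp only [frobSq, Matrix.trace, Matrix.diag, Matrix.mul_apply, Matrix.transpose_apply, sq]
  exact Finset.sum_comm

lemma frobSq_nonneg (M : Matrix m κ ℝ) : 0 ≤ frobSq M := by
  rw [frobSq_eq_sum]
  positivity

lemma frobSq_neg (M : Matrix m κ ℝ) : frobSq (-M) = frobSq M := by
  simp [frobSq]

lemma frobSq_add_of_transpose_mul_eq_zero {A B : Matrix m κ ℝ} (h : Aᵀ * B = 0) :
    frobSq (A + B) = frobSq A + frobSq B := by
  have h' : Bᵀ * A = 0 := by
    rw [← Matrix.transpose_transpose (Bᵀ * A), Matrix.transpose_mul, Matrix.transpose_transpose,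
      h, Matrix.transpose_zero]
  simp only [frobSq, Matrix.transpose_add, Matrix.add_mul, Matrix.mul_add, h, h',
    Matrix.trace_add, add_zero, zero_add]

lemma frobSq_eq_frobSq_proj_mul_sub_add (hPt : Pᵀ = P) (hPP : IsIdempotentElem P)
    (X : Matrix m κ ℝ) : frobSq X = frobSq (P * X - X) + frobSq (P * X) := by
  have horth : (-(P * X - X))ᵀ * (P * X) = 0 := by
    rw [Matrix.transpose_neg, Matrix.neg_mul,
      transpose_proj_mul_sub_mul_proj_mul_eq_zero hPt hPP, neg_zero]
  rw [← frobSq_neg (P * X - X), ← frobSq_add_of_transpose_mul_eq_zero horth]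
  congr 1
  abel

lemma frobSq_proj_mul_sub_le (hPt : Pᵀ = P) (hPP : IsIdempotentElem P) (X Y : Matrix m κ ℝ) :
    frobSq (P * Y - X) ≤ frobSq (P * X - X) + frobSq (Y - X) := by
  have hsplit : P * Y - X = (P * X - X) + P * (Y - X) := by
    rw [Matrix.mul_sub]
    abel
  rw [hsplit, frobSq_add_of_transpose_mul_eq_zero
    (transpose_proj_mul_sub_mul_proj_mul_eq_zero hPt hPP _ _)]
  have := frobSq_eq_frobSq_proj_mul_sub_add hPt hPP (Y - X)
  linarith [frobSq_nonneg (P * (Y - X) - (Y - X))]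

end FrobSq

section Projection

variable {m r : Type*} [Fintype r]

lemma transpose_mul_transpose_self (U : Matrix m r ℝ) : (U * Uᵀ)ᵀ = U * Uᵀ := by
  rw [Matrix.transpose_mul, Matrix.transpose_transpose]

variable [Fintype m] [DecidableEq r] {U : Matrix m r ℝ}

lemma isIdempotentElem_mul_transpose (hU : Uᵀ * U = 1) : IsIdempotentElem (U * Uᵀ) := by
  rw [IsIdempotentElem, Matrix.mul_assoc, ← Matrix.mul_assoc Uᵀ, hU, Matrix.one_mul]

lemma frobSq_mul_transpose_mul_sub {κ : Type*} [Fintype κ] (hU : Uᵀ * U = 1)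
    (E : Matrix m κ ℝ) :
    frobSq (U * Uᵀ * E - E) = (E * Eᵀ).trace - (Uᵀ * (E * Eᵀ) * U).trace := by
  have hE := frobSq_eq_frobSq_proj_mul_sub_add (transpose_mul_transpose_self U)
    (isIdempotentElem_mul_transpose hU) E
  have hPE : frobSq (U * Uᵀ * E) = (Uᵀ * (E * Eᵀ) * U).trace := by
    rw [frobSq, Matrix.transpose_mul, transpose_mul_transpose_self, Matrix.mul_assoc,
      ← Matrix.mul_assoc (U * Uᵀ), (isIdempotentElem_mul_transpose hU).eq, ← Matrix.mul_assoc,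
      Matrix.trace_mul_cycle, ← Matrix.mul_assoc, Matrix.trace_mul_cycle]
  rw [frobSq, Matrix.trace_mul_comm] at hE
  linarith

end Projection

lemma transpose_eigenvectorUnitary_mul_mul_eq_diagonal {m : Type*} [Fintype m] [DecidableEq m]
    {A : Matrix m m ℝ} (hA : A.IsHermitian) :
    (hA.eigenvectorUnitary : Matrix m m ℝ)ᵀ * A * hA.eigenvectorUnitary =
      Matrix.diagonal hA.eigenvalues := by
  have h := hA.conjStarAlgAut_star_eigenvectorUnitary
  rw [Unitary.conjStarAlgAut_star_apply] at h
  simpa [Matrix.star_eq_conjTranspose, Matrix.conjTranspose_eq_transpose_of_trivial] using h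

lemma sum_filter_not_le_eq_sum_castLE {M : Type*} [AddCommMonoid M] {m r : ℕ} (hr : r ≤ m)
    (φ : Fin m → M) :
    ∑ i ∈ Finset.univ.filter (fun i : Fin m => ¬ r ≤ (i : ℕ)), φ i =
      ∑ j : Fin r, φ (Fin.castLE hr j) := by
  have : Finset.univ.filter (fun i : Fin m => ¬ r ≤ (i : ℕ)) =
      Finset.univ.map (Fin.castLEEmb hr) := by
    ext i
    simp only [Finset.mem_filter, Finset.mem_univ, true_and, not_le, Finset.mem_map,
      Fin.castLEEmb_apply]
    exact ⟨fun h => ⟨⟨i, h⟩, rfl⟩, fun ⟨j, hj⟩ => hj ▸ j.isLt⟩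
  rw [this, Finset.sum_map]
  rfl

def tailSqSum {m : ℕ} {ι : Type*} [Fintype ι] (E : Matrix (Fin m) ι ℝ) (r : ℕ) : ℝ :=
  ∑ i ∈ Finset.univ.filter (fun i : Fin m => r ≤ (i : ℕ)), sval E i ^ 2

lemma exists_frobSq_mul_transpose_mul_sub_le_tailSqSum {m r : ℕ} {ι : Type*} [Fintype ι]
    (E : Matrix (Fin m) ι ℝ) (hr : r ≤ m) :
    ∃ U : Matrix (Fin m) (Fin r) ℝ, Uᵀ * U = 1 ∧ frobSq (U * Uᵀ * E - E) ≤ tailSqSum E r := by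
  set hS := Matrix.isHermitian_mul_conjTranspose_self E
  set μ := hS.eigenvalues
  -- `μ (g i)` is the `(i+1)`-th largest eigenvalue, i.e. `sval E i ^ 2`
  set g : Fin m ≃ Fin m := Fin.revPerm.trans (Tuple.sort μ)
  set V : Matrix (Fin m) (Fin m) ℝ := (hS.eigenvectorUnitary : Matrix (Fin m) (Fin m) ℝ)
  set f : Fin r → Fin m := fun j => g (Fin.castLE hr j)
  have hf : Function.Injective f := g.injective.comp (Fin.castLE_injective hr)
  have hVV : Vᵀ * V = 1 := Unitary.coe_star_mul_self hS.eigenvectorUnitary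
  have hVSV : Vᵀ * (E * Eᵀ) * V = Matrix.diagonal μ :=
    transpose_eigenvectorUnitary_mul_mul_eq_diagonal hS
  have hsub : ∀ M : Matrix (Fin m) (Fin m) ℝ,
      (V.submatrix id f)ᵀ * M * V.submatrix id f = (Vᵀ * M * V).submatrix f f := fun M => by
    rw [Matrix.submatrix_mul _ _ _ id _ Function.bijective_id,
      Matrix.submatrix_mul _ _ _ id _ Function.bijective_id, Matrix.transpose_submatrix,
      Matrix.submatrix_id_id]
  have hUU : (V.submatrix id f)ᵀ * V.submatrix id f = 1 := by
    simpa [hVV, Matrix.submatrix_one f hf] using hsub 1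
  have htrace : (E * Eᵀ).trace = ∑ i, μ (g i) := by
    rw [Equiv.sum_comp g μ, ← Matrix.conjTranspose_eq_transpose_of_trivial,
      hS.trace_eq_sum_eigenvalues]
    rfl
  have htail : tailSqSum E r =
      ∑ i ∈ Finset.univ.filter (fun i : Fin m => r ≤ (i : ℕ)), μ (g i) :=
    Finset.sum_congr rfl fun i _ =>
      Real.sq_sqrt (Matrix.eigenvalues_self_mul_conjTranspose_nonneg E _)
  refine ⟨V.submatrix id f, hUU, ?_⟩
  rw [frobSq_mul_transpose_mul_sub hUU, hsub, hVSV, Matrix.submatrix_diagonal _ _ hf,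
    Matrix.trace_diagonal, htrace, htail,
    ← Finset.sum_filter_add_sum_filter_not Finset.univ (fun i : Fin m => r ≤ (i : ℕ)),
    sum_filter_not_le_eq_sum_castLE hr]
  simp [f]

section Tucker

variable {n1 n2 n3 r1 r2 r3 : ℕ}

open scoped Kronecker

lemma unfold1_tucker (G : Fin r1 → Fin r2 → Fin r3 → ℝ) (U1 : Matrix (Fin n1) (Fin r1) ℝ)
    (U2 : Matrix (Fin n2) (Fin r2) ℝ) (U3 : Matrix (Fin n3) (Fin r3) ℝ) :
    unfold1 (tucker G U1 U2 U3) = U1 * unfold1 G * (U2 ⊗ₖ U3)ᵀ := by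
  ext p ⟨q, k⟩
  simp only [unfold1, tucker, Matrix.mul_apply, Matrix.of_apply, Matrix.transpose_apply,
    Matrix.kroneckerMap_apply, Fintype.sum_prod_type, Finset.sum_mul]
  rw [Finset.sum_comm]
  refine Finset.sum_congr rfl fun b _ => ?_
  rw [Finset.sum_comm]
  exact Finset.sum_congr rfl fun c _ => Finset.sum_congr rfl fun a _ => by ring

lemma unfold1_injective : Function.Injective (unfold1 (n1 := n1) (n2 := n2) (n3 := n3)) :=
  fun _ _ h => funext₃ fun p q k => congrFun (congrFun h p) (q, k)

lemma tucker_tucker {s1 s2 s3 : ℕ} (G : Fin r1 → Fin r2 → Fin r3 → ℝ)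
    (V1 : Matrix (Fin s1) (Fin r1) ℝ) (V2 : Matrix (Fin s2) (Fin r2) ℝ)
    (V3 : Matrix (Fin s3) (Fin r3) ℝ) (U1 : Matrix (Fin n1) (Fin s1) ℝ)
    (U2 : Matrix (Fin n2) (Fin s2) ℝ) (U3 : Matrix (Fin n3) (Fin s3) ℝ) :
    tucker (tucker G V1 V2 V3) U1 U2 U3 = tucker G (U1 * V1) (U2 * V2) (U3 * V3) := by
  refine unfold1_injective ?_
  rw [unfold1_tucker, unfold1_tucker, unfold1_tucker, Matrix.mul_kronecker_mul,
    Matrix.transpose_mul]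
  simp only [Matrix.mul_assoc]

lemma unfold1_tucker_one_one (T : Fin n1 → Fin n2 → Fin n3 → ℝ)
    (Q : Matrix (Fin r1) (Fin n1) ℝ) : unfold1 (tucker T Q 1 1) = Q * unfold1 T := by
  rw [unfold1_tucker, Matrix.one_kronecker_one, Matrix.transpose_one, Matrix.mul_one]

lemma unfold2_tucker_one_one (T : Fin n1 → Fin n2 → Fin n3 → ℝ)
    (Q : Matrix (Fin r2) (Fin n2) ℝ) : unfold2 (tucker T 1 Q 1) = Q * unfold2 T := by
  ext q ⟨p, k⟩
  simp [unfold2, tucker, Matrix.mul_apply, Matrix.one_apply, mul_comm]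

lemma unfold3_tucker_one_one (T : Fin n1 → Fin n2 → Fin n3 → ℝ)
    (Q : Matrix (Fin r3) (Fin n3) ℝ) : unfold3 (tucker T 1 1 Q) = Q * unfold3 T := by
  ext k ⟨p, q⟩
  simp [unfold3, tucker, Matrix.mul_apply, Matrix.one_apply, mul_comm]

end Tucker

section TuckerApprox

variable {n1 n2 n3 r1 r2 r3 : ℕ}

lemma frob3_nonneg (T : Fin n1 → Fin n2 → Fin n3 → ℝ) : 0 ≤ frob3 T :=
  Real.sqrt_nonneg _

lemma frob3_sq (T : Fin n1 → Fin n2 → Fin n3 → ℝ) :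
    frob3 T ^ 2 = ∑ p, ∑ q, ∑ k, T p q k ^ 2 :=
  Real.sq_sqrt (by positivity : (0 : ℝ) ≤ ∑ p, ∑ q, ∑ k, T p q k ^ 2)

lemma frob3_sq_eq_frobSq_unfold1 (T : Fin n1 → Fin n2 → Fin n3 → ℝ) :
    frob3 T ^ 2 = frobSq (unfold1 T) := by
  simp [frob3_sq, frobSq_eq_sum, unfold1, Fintype.sum_prod_type]

lemma frob3_sq_eq_frobSq_unfold2 (T : Fin n1 → Fin n2 → Fin n3 → ℝ) :
    frob3 T ^ 2 = frobSq (unfold2 T) := by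
  simp only [frob3_sq, frobSq_eq_sum, unfold2, Matrix.of_apply, Fintype.sum_prod_type]
  exact Finset.sum_comm

lemma frob3_sq_eq_frobSq_unfold3 (T : Fin n1 → Fin n2 → Fin n3 → ℝ) :
    frob3 T ^ 2 = frobSq (unfold3 T) := by
  simp only [frob3_sq, frobSq_eq_sum, unfold3, Matrix.of_apply, Fintype.sum_prod_type]
  exact (Finset.sum_congr rfl fun _ _ => Finset.sum_comm).trans Finset.sum_comm

lemma frob3_tucker_proj_one_one_sub_sq_le {P : Matrix (Fin n1) (Fin n1) ℝ} (hPt : Pᵀ = P)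
    (hPP : IsIdempotentElem P) (X Y : Fin n1 → Fin n2 → Fin n3 → ℝ) :
    frob3 (tucker Y P 1 1 - X) ^ 2 ≤ frobSq (P * unfold1 X - unfold1 X) + frob3 (Y - X) ^ 2 := by
  rw [frob3_sq_eq_frobSq_unfold1, frob3_sq_eq_frobSq_unfold1]
  have h := frobSq_proj_mul_sub_le hPt hPP (unfold1 X) (unfold1 Y)
  rwa [← unfold1_tucker_one_one] at h

lemma frob3_tucker_one_proj_one_sub_sq_le {P : Matrix (Fin n2) (Fin n2) ℝ} (hPt : Pᵀ = P)
    (hPP : IsIdempotentElem P) (X Y : Fin n1 → Fin n2 → Fin n3 → ℝ) :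
    frob3 (tucker Y 1 P 1 - X) ^ 2 ≤ frobSq (P * unfold2 X - unfold2 X) + frob3 (Y - X) ^ 2 := by
  rw [frob3_sq_eq_frobSq_unfold2, frob3_sq_eq_frobSq_unfold2]
  have h := frobSq_proj_mul_sub_le hPt hPP (unfold2 X) (unfold2 Y)
  rwa [← unfold2_tucker_one_one] at h

lemma frob3_tucker_one_one_sub_sq (X : Fin n1 → Fin n2 → Fin n3 → ℝ)
    (P : Matrix (Fin n3) (Fin n3) ℝ) :
    frob3 (tucker X 1 1 P - X) ^ 2 = frobSq (P * unfold3 X - unfold3 X) := by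
  rw [frob3_sq_eq_frobSq_unfold3, ← unfold3_tucker_one_one]
  rfl

def tuckerTailSqSum (E : Fin n1 → Fin n2 → Fin n3 → ℝ) (r1 r2 r3 : ℕ) : ℝ :=
  tailSqSum (unfold1 E) r1 + tailSqSum (unfold2 E) r2 + tailSqSum (unfold3 E) r3

lemma exists_tucker_frob3_sub_le (E : Fin n1 → Fin n2 → Fin n3 → ℝ)
    (h1 : r1 ≤ n1) (h2 : r2 ≤ n2) (h3 : r3 ≤ n3) :
    ∃ (G : Fin r1 → Fin r2 → Fin r3 → ℝ) (U1 : Matrix (Fin n1) (Fin r1) ℝ)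
      (U2 : Matrix (Fin n2) (Fin r2) ℝ) (U3 : Matrix (Fin n3) (Fin r3) ℝ),
      frob3 (tucker G U1 U2 U3 - E) ≤ Real.sqrt (tuckerTailSqSum E r1 r2 r3) := by
  obtain ⟨U1, hU1, hE1⟩ := exists_frobSq_mul_transpose_mul_sub_le_tailSqSum (unfold1 E) h1
  obtain ⟨U2, hU2, hE2⟩ := exists_frobSq_mul_transpose_mul_sub_le_tailSqSum (unfold2 E) h2
  obtain ⟨U3, hU3, hE3⟩ := exists_frobSq_mul_transpose_mul_sub_le_tailSqSum (unfold3 E) h3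
  set E3 : Fin n1 → Fin n2 → Fin n3 → ℝ := tucker E 1 1 (U3 * U3ᵀ)
  set E23 : Fin n1 → Fin n2 → Fin n3 → ℝ := tucker E3 1 (U2 * U2ᵀ) 1
  have hcore : tucker (tucker E U1ᵀ U2ᵀ U3ᵀ) U1 U2 U3 = tucker E23 (U1 * U1ᵀ) 1 1 := by
    simp only [E23, E3, tucker_tucker, Matrix.mul_one, Matrix.one_mul]
  refine ⟨tucker E U1ᵀ U2ᵀ U3ᵀ, U1, U2, U3, Real.le_sqrt_of_sq_le ?_⟩
  rw [hcore]
  calc frob3 (tucker E23 (U1 * U1ᵀ) 1 1 - E) ^ 2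
      ≤ frobSq (U1 * U1ᵀ * unfold1 E - unfold1 E) + frob3 (E23 - E) ^ 2 :=
        frob3_tucker_proj_one_one_sub_sq_le (transpose_mul_transpose_self U1)
          (isIdempotentElem_mul_transpose hU1) _ _
    _ ≤ frobSq (U1 * U1ᵀ * unfold1 E - unfold1 E) +
        (frobSq (U2 * U2ᵀ * unfold2 E - unfold2 E) + frob3 (E3 - E) ^ 2) := by
        gcongr
        exact frob3_tucker_one_proj_one_sub_sq_le (transpose_mul_transpose_self U2)
          (isIdempotentElem_mul_transpose hU2) _ _
    _ ≤ _ := by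
        rw [frob3_tucker_one_one_sub_sq, tuckerTailSqSum]
        linarith

end TuckerApprox

section Kan

lemma enorm_eq_norm_toLp {ι : Type*} [Fintype ι] (x : ι → ℝ) :
    _root_.enorm x = ‖WithLp.toLp 2 x‖ := by
  simp [_root_.enorm, EuclideanSpace.norm_eq]

lemma enorm_fun_add_le {ι : Type*} [Fintype ι] (x y : ι → ℝ) :
    _root_.enorm (x + y) ≤ _root_.enorm x + _root_.enorm y := by
  simpa only [enorm_eq_norm_toLp, WithLp.toLp_add] using norm_add_le _ _

lemma enorm_sq {ι : Type*} [Fintype ι] (x : ι → ℝ) : _root_.enorm x ^ 2 = ∑ i, x i ^ 2 :=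
  Real.sq_sqrt (by positivity : (0 : ℝ) ≤ ∑ i, x i ^ 2)

variable {n m nd : ℕ}

lemma enorm_sum_mul_le (D : Fin n → Fin m → Fin nd → ℝ) (w : Fin n → Fin nd → ℝ) :
    _root_.enorm (fun q => ∑ p, ∑ k, D p q k * w p k) ≤
      frob3 D * Real.sqrt (∑ p, ∑ k, w p k ^ 2) := by
  rw [_root_.enorm, frob3, ← Real.sqrt_mul (by positivity)]
  refine Real.sqrt_le_sqrt ?_
  have hcs : ∀ q, (∑ p, ∑ k, D p q k * w p k) ^ 2 ≤
      (∑ p, ∑ k, D p q k ^ 2) * ∑ p, ∑ k, w p k ^ 2 := fun q => by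
    simp only [← Fintype.sum_prod_type']
    exact Finset.sum_mul_sq_le_sq_mul_sq _ _ _
  calc ∑ q, (∑ p, ∑ k, D p q k * w p k) ^ 2
      ≤ ∑ q, (∑ p, ∑ k, D p q k ^ 2) * ∑ p, ∑ k, w p k ^ 2 := Finset.sum_le_sum fun q _ => hcs q
    _ = _ := by rw [← Finset.sum_mul, Finset.sum_comm]

variable (b : Fin nd → ℝ → ℝ)

lemma enorm_kanLayer_le {B : ℝ} (hB : 0 ≤ B) (hbound : ∀ k t, |b k t| ≤ B)
    (D : Fin n → Fin m → Fin nd → ℝ) (z : Fin n → ℝ) :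
    _root_.enorm (kanLayer b D z) ≤ B * Real.sqrt ((n : ℝ) * nd) * frob3 D := by
  have hw : Real.sqrt (∑ p, ∑ k, b k (z p) ^ 2) ≤ B * Real.sqrt ((n : ℝ) * nd) := by
    rw [← Real.sqrt_sq hB, ← Real.sqrt_mul (sq_nonneg B)]
    refine Real.sqrt_le_sqrt ?_
    calc ∑ p, ∑ k, b k (z p) ^ 2 ≤ ∑ _p : Fin n, ∑ _k : Fin nd, B ^ 2 :=
          Finset.sum_le_sum fun p _ => Finset.sum_le_sum fun k _ =>
            sq_le_sq' (abs_le.mp (hbound k (z p))).1 (abs_le.mp (hbound k (z p))).2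
      _ = B ^ 2 * (n * nd) := by
          simp only [Finset.sum_const, Finset.card_univ, Fintype.card_fin, nsmul_eq_mul]
          ring
  calc _ ≤ frob3 D * Real.sqrt (∑ p, ∑ k, b k (z p) ^ 2) := enorm_sum_mul_le D _
    _ ≤ frob3 D * (B * Real.sqrt ((n : ℝ) * nd)) := mul_le_mul_of_nonneg_left hw (frob3_nonneg D)
    _ = _ := mul_comm _ _

lemma enorm_kanLayer_sub_kanLayer_le {K : ℝ} (hK : 0 ≤ K)
    (hlip : ∀ k s t, |b k s - b k t| ≤ K * |s - t|)
    (A : Fin n → Fin m → Fin nd → ℝ) (z z' : Fin n → ℝ) :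
    _root_.enorm (kanLayer b A z - kanLayer b A z') ≤
      frob3 A * K * Real.sqrt nd * _root_.enorm (z - z') := by
  have hw : Real.sqrt (∑ p, ∑ k, (b k (z p) - b k (z' p)) ^ 2) ≤
      K * Real.sqrt nd * _root_.enorm (z - z') := by
    have h0 : 0 ≤ K * Real.sqrt nd * _root_.enorm (z - z') :=
      mul_nonneg (mul_nonneg hK (Real.sqrt_nonneg _)) (Real.sqrt_nonneg _)
    rw [← Real.sqrt_sq h0]
    refine Real.sqrt_le_sqrt ?_
    calc ∑ p, ∑ k, (b k (z p) - b k (z' p)) ^ 2 ≤ ∑ p, ∑ _k : Fin nd, (K * |z p - z' p|) ^ 2 :=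
          Finset.sum_le_sum fun p _ => Finset.sum_le_sum fun k _ =>
            sq_le_sq' (abs_le.mp (hlip k (z p) (z' p))).1 (abs_le.mp (hlip k (z p) (z' p))).2
      _ = _ := by
          rw [mul_pow, mul_pow, Real.sq_sqrt (Nat.cast_nonneg _), enorm_sq]
          simp only [mul_pow, sq_abs, Finset.sum_const, Finset.card_univ, Fintype.card_fin,
            nsmul_eq_mul, Pi.sub_apply, Finset.mul_sum]
          exact Finset.sum_congr rfl fun _ _ => by ring
  have hdiff : kanLayer b A z - kanLayer b A z' =
      fun q => ∑ p, ∑ k, A p q k * (b k (z p) - b k (z' p)) := by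
    funext q
    simp only [kanLayer, Pi.sub_apply, mul_sub, Finset.sum_sub_distrib]
  rw [hdiff]
  calc _ ≤ frob3 A * Real.sqrt (∑ p, ∑ k, (b k (z p) - b k (z' p)) ^ 2) := enorm_sum_mul_le A _
    _ ≤ frob3 A * (K * Real.sqrt nd * _root_.enorm (z - z')) :=
        mul_le_mul_of_nonneg_left hw (frob3_nonneg A)
    _ = _ := by ring

lemma enorm_kanLayer_sub_kanLayer_le_add {B K : ℝ} (hB : 0 ≤ B) (hbound : ∀ k t, |b k t| ≤ B)
    (hK : 0 ≤ K) (hlip : ∀ k s t, |b k s - b k t| ≤ K * |s - t|)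
    (A' A : Fin n → Fin m → Fin nd → ℝ) (z' z : Fin n → ℝ) :
    _root_.enorm (kanLayer b A' z' - kanLayer b A z) ≤
      frob3 A * K * Real.sqrt nd * _root_.enorm (z' - z) +
        B * Real.sqrt ((n : ℝ) * nd) * frob3 (A' - A) := by
  have hsplit : kanLayer b A' z' - kanLayer b A z =
      (kanLayer b A z' - kanLayer b A z) + kanLayer b (A' - A) z' := by
    funext q
    simp only [kanLayer, Pi.add_apply, Pi.sub_apply, sub_mul, Finset.sum_sub_distrib]
    ring
  rw [hsplit]
  exact (enorm_fun_add_le _ _).trans (add_le_add (enorm_kanLayer_sub_kanLayer_le b hK hlip A z' z)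
    (enorm_kanLayer_le b hB hbound _ z'))

end Kan

lemma le_pow_mul_add_sum_of_le_mul_add {C : ℝ} (hC : 0 ≤ C) {e c : ℕ → ℝ} {L : ℕ}
    (h : ∀ ℓ < L, e (ℓ + 1) ≤ C * e ℓ + c ℓ) :
    e L ≤ C ^ L * e 0 + ∑ ℓ ∈ Finset.range L, C ^ (L - 1 - ℓ) * c ℓ := by
  induction L with
  | zero => simp
  | succ L ih =>
    have hpow : ∀ ℓ ∈ Finset.range L, C * (C ^ (L - 1 - ℓ) * c ℓ) = C ^ (L + 1 - 1 - ℓ) * c ℓ :=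
      fun ℓ hℓ => by
        rw [← mul_assoc, ← pow_succ', show L - 1 - ℓ + 1 = L + 1 - 1 - ℓ by
          have := Finset.mem_range.mp hℓ; omega]
    calc e (L + 1) ≤ C * e L + c L := h L L.lt_succ_self
      _ ≤ C * (C ^ L * e 0 + ∑ ℓ ∈ Finset.range L, C ^ (L - 1 - ℓ) * c ℓ) + c L := by
        gcongr
        exact ih fun ℓ hℓ => h ℓ (hℓ.trans L.lt_succ_self)
      _ = _ := by
        rw [Finset.sum_range_succ, mul_add, Finset.mul_sum, Finset.sum_congr rfl hpow, pow_succ',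
          show L + 1 - 1 - L = 0 by omega, pow_zero]
        ring

lemma enorm_kanForward_sub_kanForward_le {nd L : ℕ} (b : Fin nd → ℝ → ℝ) {B K M : ℝ}
    (hB : 0 ≤ B) (hbound : ∀ k t, |b k t| ≤ B)
    (hK : 0 ≤ K) (hlip : ∀ k s t, |b k s - b k t| ≤ K * |s - t|)
    (n : ℕ → ℕ) (A' A : ∀ ℓ : ℕ, Fin (n ℓ) → Fin (n (ℓ + 1)) → Fin nd → ℝ) (δ : ℕ → ℝ)
    (hA : ∀ ℓ < L, frob3 (A ℓ) ≤ M) (hδ : ∀ ℓ < L, frob3 (A' ℓ - A ℓ) ≤ δ ℓ)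
    (x : Fin (n 0) → ℝ) :
    _root_.enorm (kanForward b n A' L x - kanForward b n A L x) ≤
      ∑ ℓ ∈ Finset.range L,
        (M * K * Real.sqrt nd) ^ (L - 1 - ℓ) * (B * Real.sqrt ((n ℓ : ℝ) * nd) * δ ℓ) := by
  obtain rfl | hL := Nat.eq_zero_or_pos L
  · simp [_root_.enorm, kanForward]
  let err : ℕ → ℝ := fun ℓ => _root_.enorm (kanForward b n A' ℓ x - kanForward b n A ℓ x)
  have hM : 0 ≤ M := (frob3_nonneg _).trans (hA 0 hL)
  have hstep : ∀ ℓ < L, err (ℓ + 1) ≤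
      M * K * Real.sqrt nd * err ℓ + B * Real.sqrt ((n ℓ : ℝ) * nd) * δ ℓ := fun ℓ hℓ => by
    refine (enorm_kanLayer_sub_kanLayer_le_add b hB hbound hK hlip _ _ _ _).trans ?_
    gcongr
    · exact Real.sqrt_nonneg _
    · exact hA ℓ hℓ
    · exact hδ ℓ hℓ
  have herr0 : err 0 = 0 := by simp [err, kanForward, _root_.enorm]
  simpa [herr0] using le_pow_mul_add_sum_of_le_mul_add (by positivity) hstep

theorem lotra_expressiveness_general {nd L : ℕ} (b : Fin nd → ℝ → ℝ) (B K M : ℝ)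
    (hB : 0 < B) (hK : 0 < K)
    (hbound : ∀ (k : Fin nd) (t : ℝ), |b k t| ≤ B)
    (hlip : ∀ (k : Fin nd) (s t : ℝ), |b k s - b k t| ≤ K * |s - t|)
    (n : ℕ → ℕ)
    (Atg Apt : ∀ ℓ : ℕ, Fin (n ℓ) → Fin (n (ℓ + 1)) → Fin nd → ℝ)
    (hMtg : ∀ ℓ < L, frob3 (Atg ℓ) ≤ M)
    (r1 r2 r3 : ℕ → ℕ)
    (hr1 : ∀ ℓ < L, r1 ℓ ≤ n ℓ) (hr2 : ∀ ℓ < L, r2 ℓ ≤ n (ℓ + 1))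
    (hr3 : ∀ ℓ < L, r3 ℓ ≤ nd) :
    ∃ (G : ∀ ℓ : ℕ, Fin (r1 ℓ) → Fin (r2 ℓ) → Fin (r3 ℓ) → ℝ)
      (U1 : ∀ ℓ : ℕ, Matrix (Fin (n ℓ)) (Fin (r1 ℓ)) ℝ)
      (U2 : ∀ ℓ : ℕ, Matrix (Fin (n (ℓ + 1))) (Fin (r2 ℓ)) ℝ)
      (U3 : ∀ ℓ : ℕ, Matrix (Fin nd) (Fin (r3 ℓ)) ℝ),
      ∀ x : Fin (n 0) → ℝ,
        _root_.enorm (fun j =>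
            kanForward b n
              (fun ℓ p q k => Apt ℓ p q k + tucker (G ℓ) (U1 ℓ) (U2 ℓ) (U3 ℓ) p q k)
              L x j
          - kanForward b n Atg L x j) ≤
        ∑ ℓ : Fin L,
          (M * K * Real.sqrt (nd : ℝ)) ^ (L - 1 - (ℓ : ℕ)) *
            (B * Real.sqrt ((n ℓ : ℝ) * (nd : ℝ))) *
            Real.sqrt
              ((∑ r ∈ Finset.univ.filter (fun r : Fin (n ℓ) => r1 ℓ ≤ (r : ℕ)),
                  sval (unfold1 (fun p q k => Atg ℓ p q k - Apt ℓ p q k)) r ^ 2) +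
               (∑ r ∈ Finset.univ.filter (fun r : Fin (n (ℓ + 1)) => r2 ℓ ≤ (r : ℕ)),
                  sval (unfold2 (fun p q k => Atg ℓ p q k - Apt ℓ p q k)) r ^ 2) +
               (∑ r ∈ Finset.univ.filter (fun r : Fin nd => r3 ℓ ≤ (r : ℕ)),
                  sval (unfold3 (fun p q k => Atg ℓ p q k - Apt ℓ p q k)) r ^ 2)) := by
  have happrox : ∀ ℓ, ∃ G U1 U2 U3, ℓ < L →
      frob3 (tucker G U1 U2 U3 - (Atg ℓ - Apt ℓ)) ≤
        Real.sqrt (tuckerTailSqSum (Atg ℓ - Apt ℓ) (r1 ℓ) (r2 ℓ) (r3 ℓ)) := fun ℓ => by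
    by_cases hℓ : ℓ < L
    · obtain ⟨G, U1, U2, U3, h⟩ :=
        exists_tucker_frob3_sub_le (Atg ℓ - Apt ℓ) (hr1 ℓ hℓ) (hr2 ℓ hℓ) (hr3 ℓ hℓ)
      exact ⟨G, U1, U2, U3, fun _ => h⟩
    · exact ⟨0, 0, 0, 0, fun h => absurd h hℓ⟩
  choose G U1 U2 U3 hG using happrox
  refine ⟨G, U1, U2, U3, fun x => ?_⟩
  refine (enorm_kanForward_sub_kanForward_le b hB.le hbound hK.le hlip n _ Atg
    (fun ℓ => Real.sqrt (tuckerTailSqSum (Atg ℓ - Apt ℓ) (r1 ℓ) (r2 ℓ) (r3 ℓ))) hMtg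
    (fun ℓ hℓ => ?_) x).trans_eq ?_
  · refine le_of_eq_of_le (congrArg frob3 ?_) (hG ℓ hℓ)
    funext p q k
    simp only [Pi.sub_apply]
    ring
  · rw [← Fin.sum_univ_eq_sum_range]
    exact Finset.sum_congr rfl fun ℓ _ => (mul_assoc _ _ _).symm

/-- **Theorem 1 (Expressiveness of LoTRA).**  For an `L`-layer KAN whose basis
functions are bounded by `B > 0` and `K`-Lipschitz (`K > 0`), and target/pre-trained
parameter tensors bounded in Frobenius norm by `M` for all layers `ℓ < L`, with fixed
Tucker ranks `r1 ℓ ≤ n ℓ`, `r2 ℓ ≤ n (ℓ+1)`, `r3 ℓ ≤ n_d`, there exists a LoTRA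
fine-tuned model `A_ft ℓ = A_pt ℓ + G ℓ ×₁ U1 ℓ ×₂ U2 ℓ ×₃ U3 ℓ` such that for every
input `x`,
`‖Ψ_ft(x) − Ψ_tg(x)‖₂ ≤ Σ_{ℓ<L} (M K √n_d)^{L−1−ℓ} B √(n_ℓ n_d) ·
  (tail sums of squared singular values of the unfoldings of E_ℓ = A_tg ℓ − A_pt ℓ)^{1/2}`.
(Layers and singular-value indices are 0-based.) -/
theorem lotra_expressiveness {nd L : ℕ} (b : Fin nd → ℝ → ℝ) (B K M : ℝ)
    (hB : 0 < B) (hK : 0 < K)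
    (hbound : ∀ (k : Fin nd) (t : ℝ), |b k t| ≤ B)
    (hlip : ∀ (k : Fin nd) (s t : ℝ), |b k s - b k t| ≤ K * |s - t|)
    (n : ℕ → ℕ)
    (Atg Apt : ∀ ℓ : ℕ, Fin (n ℓ) → Fin (n (ℓ + 1)) → Fin nd → ℝ)
    (hMtg : ∀ ℓ < L, frob3 (Atg ℓ) ≤ M) (hMpt : ∀ ℓ < L, frob3 (Apt ℓ) ≤ M)
    (r1 r2 r3 : ℕ → ℕ)
    (hr1 : ∀ ℓ < L, r1 ℓ ≤ n ℓ) (hr2 : ∀ ℓ < L, r2 ℓ ≤ n (ℓ + 1))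
    (hr3 : ∀ ℓ < L, r3 ℓ ≤ nd) :
    ∃ (G : ∀ ℓ : ℕ, Fin (r1 ℓ) → Fin (r2 ℓ) → Fin (r3 ℓ) → ℝ)
      (U1 : ∀ ℓ : ℕ, Matrix (Fin (n ℓ)) (Fin (r1 ℓ)) ℝ)
      (U2 : ∀ ℓ : ℕ, Matrix (Fin (n (ℓ + 1))) (Fin (r2 ℓ)) ℝ)
      (U3 : ∀ ℓ : ℕ, Matrix (Fin nd) (Fin (r3 ℓ)) ℝ),
      ∀ x : Fin (n 0) → ℝ,
        _root_.enorm (fun j =>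
            kanForward b n
              (fun ℓ p q k => Apt ℓ p q k + tucker (G ℓ) (U1 ℓ) (U2 ℓ) (U3 ℓ) p q k)
              L x j
          - kanForward b n Atg L x j) ≤
        ∑ ℓ : Fin L,
          (M * K * Real.sqrt (nd : ℝ)) ^ (L - 1 - (ℓ : ℕ)) *
            (B * Real.sqrt ((n ℓ : ℝ) * (nd : ℝ))) *
            Real.sqrt
              ((∑ r ∈ Finset.univ.filter (fun r : Fin (n ℓ) => r1 ℓ ≤ (r : ℕ)),
                  sval (unfold1 (fun p q k => Atg ℓ p q k - Apt ℓ p q k)) r ^ 2) +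
               (∑ r ∈ Finset.univ.filter (fun r : Fin (n (ℓ + 1)) => r2 ℓ ≤ (r : ℕ)),
                  sval (unfold2 (fun p q k => Atg ℓ p q k - Apt ℓ p q k)) r ^ 2) +
               (∑ r ∈ Finset.univ.filter (fun r : Fin nd => r3 ℓ ≤ (r : ℕ)),
                  sval (unfold3 (fun p q k => Atg ℓ p q k - Apt ℓ p q k)) r ^ 2)) :=
  lotra_expressiveness_general b B K M hB hK hbound hlip n Atg Apt hMtg r1 r2 r3 hr1 hr2 hr3
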